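/- Let t₁, t₂, n₀ ∈ ℝ³ with ‖n₀‖ = 1 and ⟨n₀,t₁⟩ = ⟨n₀,t₂⟩ = 0, P = (t₁|t₂|n₀) invertible, and m₁, m₂, ν₁, ν₂ ∈ ℝ³. Suppose U := (m₁|m₂|n₀)·P⁻¹ is symmetric positive definite. Define II_m♭ = -(m₁|m₂|0)ᵀ·(ν₁|ν₂|0), II_{y₀}♭ = -(t₁|t₂|0)ᵀ·(ν₁|ν₂|0), and Î_m = (m₁|m₂|n₀)ᵀ·(m₁|m₂|n₀). Then the bending tensor R_∞♭ := Pᵀ·[(P⁻ᵀ·Î_m·P⁻¹)^{-1/2}·P⁻ᵀ·II_m♭·P⁻¹ - P⁻ᵀ·II_{y₀}♭·P⁻¹]·P equals the zero matrix. -/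

import Mathlib

open Matrix

/-- The 3×3 matrix with columns `a`, `b`, `c`. -/
def col3 (a b c : Fin 3 → ℝ) : Matrix (Fin 3) (Fin 3) ℝ :=
  Matrix.of fun i j => ![a, b, c] j i

/-- The positive semidefinite square root of a positive semidefinite matrix, as defined in
Mathlib (Dec 2024) under the name `Matrix.PosSemidef.sqrt` (since removed). -/
noncomputable def Matrix.PosSemidef.sqrt {n : Type*} [Fintype n] [DecidableEq n] {𝕜 : Type*}
    [RCLike 𝕜] [PartialOrder 𝕜] {A : Matrix n n 𝕜} (hA : A.PosSemidef) : Matrix n n 𝕜 :=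
  hA.1.eigenvectorUnitary.1 * diagonal ((↑) ∘ Real.sqrt ∘ hA.1.eigenvalues) *
  (star hA.1.eigenvectorUnitary : Matrix n n 𝕜)

/-!
Let `M = (m₁|m₂|n₀)` and `Π = 1 - n₀ n₀ᵀ`, the orthogonal projection onto the tangent plane.
As `U = M P⁻¹` is symmetric, `P⁻ᵀ Mᵀ M P⁻¹ = Uᵀ U = U²`, so the square root in the bending tensor
is `U` itself. Orthonormality of `n₀` to `t₁, t₂` gives `(t₁|t₂|0) = Π P`, i.e.
`P⁻ᵀ (t₁|t₂|0)ᵀ = Π`, and `U P = M` gives `(m₁|m₂|0) = U (t₁|t₂|0)`. Since `U n₀ = n₀` and `U` is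
symmetric, `U` commutes with `Π`, so `U⁻¹ P⁻ᵀ (m₁|m₂|0)ᵀ = U⁻¹ Π U = Π = P⁻ᵀ (t₁|t₂|0)ᵀ` and the
two terms of the bending tensor cancel.
-/

open scoped MatrixOrder in
lemma Matrix.PosSemidef.eq_sqrt_of_sq_eq {n : Type*} [Fintype n] [DecidableEq n]
    {A B : Matrix n n ℝ} (hB : B.PosSemidef) (hA : A.PosSemidef) (hsq : B ^ 2 = A) :
    B = hA.sqrt := by
  have hc : CFC.sqrt A = B := CFC.sqrt_unique (by rw [← hsq, sq]) hB.nonneg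
  rw [← hc, CFC.sqrt_eq_cfc, cfc_nnreal_eq_real _ A, hA.1.cfc_eq]
  simp only [IsHermitian.cfc, Matrix.PosSemidef.sqrt, Unitary.conjStarAlgAut_apply]
  congr 3
  funext i
  simp [Real.coe_sqrt, Real.coe_toNNReal', hA.eigenvalues_nonneg i]

section Projection

variable {ι R : Type*} [DecidableEq ι] [CommRing R] {n : ι → R}

lemma Matrix.transpose_one_sub_vecMulVec_self : (1 - vecMulVec n n)ᵀ = 1 - vecMulVec n n := by
  rw [transpose_sub, transpose_one, transpose_vecMulVec]

variable [Fintype ι]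

lemma Matrix.one_sub_vecMulVec_mulVec_of_dotProduct_eq_zero {t : ι → R} (h : n ⬝ᵥ t = 0) :
    (1 - vecMulVec n n) *ᵥ t = t := by
  rw [sub_mulVec, one_mulVec, vecMulVec_mulVec, h]
  simp

lemma Matrix.one_sub_vecMulVec_mulVec_self (h : n ⬝ᵥ n = 1) : (1 - vecMulVec n n) *ᵥ n = 0 := by
  rw [sub_mulVec, one_mulVec, vecMulVec_mulVec, h]
  simp

lemma Matrix.commute_one_sub_vecMulVec_self {A : Matrix ι ι R} (hA : Aᵀ = A) (hn : A *ᵥ n = n) :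
    Commute A (1 - vecMulVec n n) :=
  (Commute.one_right A).sub_right <| by
    rw [Commute, SemiconjBy, mul_vecMulVec, vecMulVec_mul, ← mulVec_transpose, hA, hn]

end Projection

lemma mul_col3 (A : Matrix (Fin 3) (Fin 3) ℝ) (a b c : Fin 3 → ℝ) :
    A * col3 a b c = col3 (A *ᵥ a) (A *ᵥ b) (A *ᵥ c) := by
  ext i j
  fin_cases j <;> simp [col3, mul_apply, mulVec, dotProduct]

lemma col3_inj {a b c a' b' c' : Fin 3 → ℝ} :
    col3 a b c = col3 a' b' c' ↔ a = a' ∧ b = b' ∧ c = c' := by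
  refine ⟨fun h => ⟨?_, ?_, ?_⟩, fun ⟨ha, hb, hc⟩ => ha ▸ hb ▸ hc ▸ rfl⟩ <;> ext i
  exacts [congrFun (congrFun h i) 0, congrFun (congrFun h i) 1, congrFun (congrFun h i) 2]

/-- `R_∞♭`, with `X` in place of the stretch `(P⁻ᵀ Îₘ P⁻¹)^{1/2}`. -/
noncomputable def bendingTensor {ι R : Type*} [Fintype ι] [DecidableEq ι] [CommRing R]
    (P X IIm IIy : Matrix ι ι R) : Matrix ι ι R :=
  Pᵀ * (X⁻¹ * ((P⁻¹)ᵀ * IIm * P⁻¹) - (P⁻¹)ᵀ * IIy * P⁻¹) * P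

lemma bendingTensor_eq_zero {ι R : Type*} [Fintype ι] [DecidableEq ι] [CommRing R]
    {P X IIm IIy : Matrix ι ι R} (hX : IsUnit X.det) (h : (P⁻¹)ᵀ * IIm = X * ((P⁻¹)ᵀ * IIy)) :
    bendingTensor P X IIm IIy = 0 := by
  rw [bendingTensor, h, Matrix.mul_assoc X, ← Matrix.mul_assoc X⁻¹, nonsing_inv_mul _ hX,
    Matrix.one_mul, sub_self, Matrix.mul_zero, Matrix.zero_mul]

/-- the constrained Cosserat bending tensor
`R_∞♭ = Pᵀ[(P⁻ᵀ Î_m P⁻¹)^{-1/2} P⁻ᵀ II_m♭ P⁻¹ - P⁻ᵀ II_{y₀}♭ P⁻¹]P`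
vanishes for deformations obtained from a pure elastic stretch leaving the
unit normal unaltered. -/
theorem cosserat_bending_vanishes (t₁ t₂ n₀ m₁ m₂ ν₁ ν₂ : Fin 3 → ℝ)
    (P U : Matrix (Fin 3) (Fin 3) ℝ)
    (hn : n₀ ⬝ᵥ n₀ = 1) (h1 : n₀ ⬝ᵥ t₁ = 0) (h2 : n₀ ⬝ᵥ t₂ = 0)
    (hPdef : P = col3 t₁ t₂ n₀) (hP : IsUnit P.det)
    (hU : U = col3 m₁ m₂ n₀ * P⁻¹) (hUpd : U.PosDef) :
    ∀ h : ((P⁻¹)ᵀ * ((col3 m₁ m₂ n₀)ᵀ * col3 m₁ m₂ n₀) * P⁻¹).PosSemidef,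
      Pᵀ * ((h.sqrt)⁻¹ * ((P⁻¹)ᵀ * (-((col3 m₁ m₂ 0)ᵀ * col3 ν₁ ν₂ 0)) * P⁻¹) -
        (P⁻¹)ᵀ * (-((col3 t₁ t₂ 0)ᵀ * col3 ν₁ ν₂ 0)) * P⁻¹) * P = 0 := by
  intro h
  have hUP : U * P = col3 m₁ m₂ n₀ := by rw [hU, nonsing_inv_mul_cancel_right _ _ hP]
  obtain ⟨hUt₁, hUt₂, hUn⟩ : U *ᵥ t₁ = m₁ ∧ U *ᵥ t₂ = m₂ ∧ U *ᵥ n₀ = n₀ := by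
    rwa [hPdef, mul_col3, col3_inj] at hUP
  have hUsymm : Uᵀ = U := hUpd.isHermitian
  have hsqrt : h.sqrt = U := by
    refine (hUpd.posSemidef.eq_sqrt_of_sq_eq h ?_).symm
    rw [← hUP, transpose_mul, hUsymm]
    simp only [← Matrix.mul_assoc]
    rw [← transpose_mul, mul_nonsing_inv _ hP, transpose_one, Matrix.one_mul,
      mul_nonsing_inv_cancel_right _ _ hP, sq]
  have hproj : (P⁻¹)ᵀ * (col3 t₁ t₂ 0)ᵀ = 1 - vecMulVec n₀ n₀ := by
    have hT : col3 t₁ t₂ 0 = (1 - vecMulVec n₀ n₀) * P := by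
      rw [hPdef, mul_col3, one_sub_vecMulVec_mulVec_of_dotProduct_eq_zero h1,
        one_sub_vecMulVec_mulVec_of_dotProduct_eq_zero h2, one_sub_vecMulVec_mulVec_self hn]
    rw [← transpose_mul, hT, Matrix.mul_assoc, mul_nonsing_inv _ hP, Matrix.mul_one,
      transpose_one_sub_vecMulVec_self]
  have hM : col3 m₁ m₂ 0 = U * col3 t₁ t₂ 0 := by rw [mul_col3, hUt₁, hUt₂, mulVec_zero]
  rw [hsqrt]
  refine bendingTensor_eq_zero ((isUnit_iff_isUnit_det U).mp hUpd.isUnit) ?_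
  simp only [hM, transpose_mul, hUsymm, Matrix.mul_neg, ← Matrix.mul_assoc, hproj,
    (commute_one_sub_vecMulVec_self hUsymm hUn).eq]
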